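/- Let E : ℝ^N → ℝ be C², strictly convex and coercive, with Hessian eigenvalues uniformly bounded in [ρ_L, ρ_U], 0 < ρ_L ≤ ρ_U. Then the sequence of gradient norms {‖∇E(w^k)‖} produced by Newton's method with exact line search over λ ∈ [0,1] converges to zero, i.e., lim_{k→∞} ‖∇E(w^k)‖ = 0. -/

import Mathlib

/-!
Along a Newton direction `d` (`∇²E(x) d = -∇E(x)`), the quadratic upper bound
`E(x + μ d) ≤ E(x) - μ q + ρU μ² ‖d‖² / 2`, with `q = ⟪∇²E(x) d, d⟫ ≥ ρL ‖d‖²`, shows that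
the damped step `μ = ρL / ρU ∈ [0, 1]` decreases `E` by at least `ρL q / (2 ρU)`. Since
`‖∇E(x)‖² ≤ ρU q` for a positive semidefinite Hessian bounded by `ρU`, the exact line search
decreases `E` by at least `ρL / (2 ρU²) ‖∇E(w^k)‖²`. Coercivity bounds `E` from below, so these
decrements are summable and the gradients tend to zero.
-/

open scoped RealInnerProductSpace

variable {F : Type*} [NormedAddCommGroup F] [InnerProductSpace ℝ F]

theorem LinearMap.IsSymmetric.norm_apply_sq_le_mul_inner {A : F →ₗ[ℝ] F} (hA : A.IsSymmetric)
    (hpos : ∀ v, 0 ≤ ⟪A v, v⟫) {ρ : ℝ} (hρ : 0 < ρ) (hle : ∀ v, ⟪A v, v⟫ ≤ ρ * ‖v‖ ^ 2)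
    (v : F) : ‖A v‖ ^ 2 ≤ ρ * ⟪A v, v⟫ := by
  -- Cauchy–Schwarz for the semi-inner product `⟪A ·, ·⟫`: expand `0 ≤ ⟪A u, u⟫`
  -- at `u = v - ρ⁻¹ • A v`.
  have hexpand : ⟪A (v - ρ⁻¹ • A v), v - ρ⁻¹ • A v⟫
      = ⟪A v, v⟫ - 2 * ρ⁻¹ * ‖A v‖ ^ 2 + ρ⁻¹ ^ 2 * ⟪A (A v), A v⟫ := by
    have hsw : ⟪A v, A v⟫ = ⟪A (A v), v⟫ := (hA (A v) v).symm
    simp only [map_sub, map_smul, inner_sub_left, inner_sub_right, real_inner_smul_left,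
      real_inner_smul_right, ← real_inner_self_eq_norm_sq]
    rw [← hsw]
    ring
  have hpos_u := hpos (v - ρ⁻¹ • A v)
  rw [hexpand] at hpos_u
  have hAA : ρ⁻¹ ^ 2 * ⟪A (A v), A v⟫ ≤ ρ⁻¹ * ‖A v‖ ^ 2 :=
    calc ρ⁻¹ ^ 2 * ⟪A (A v), A v⟫ ≤ ρ⁻¹ ^ 2 * (ρ * ‖A v‖ ^ 2) := by gcongr; exact hle (A v)
      _ = ρ⁻¹ * ‖A v‖ ^ 2 := by field_simp
  rw [← inv_mul_le_iff₀ hρ]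
  linarith

theorem le_add_deriv_add_of_hasDerivAt_of_le {f f' f'' : ℝ → ℝ} {c : ℝ}
    (hf : ∀ t, HasDerivAt f (f' t) t) (hf' : ∀ t, HasDerivAt f' (f'' t) t)
    (hc : ∀ t, f'' t ≤ c) : f 1 ≤ f 0 + f' 0 + c / 2 := by
  -- `g` is concave with `g' 0 = 0`, hence antitone on `[0, ∞)`.
  set g' : ℝ → ℝ := fun t => f' t - f' 0 - c * t
  set g : ℝ → ℝ := fun t => f t - f' 0 * t - c / 2 * t ^ 2
  have hg' : ∀ t, HasDerivAt g' (f'' t - c) t := fun t =>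
    ((hf' t).sub_const (f' 0)).sub ((hasDerivAt_id' t).const_mul c) |>.congr_deriv (by ring)
  have hg : ∀ t, HasDerivAt g (g' t) t := fun t =>
    ((hf t).sub ((hasDerivAt_id' t).const_mul (f' 0))).sub
      ((hasDerivAt_pow 2 t).const_mul (c / 2)) |>.congr_deriv (by simp only [g']; ring)
  have hg'_anti : Antitone g' :=
    antitone_of_hasDerivAt_nonpos hg' fun t => by simpa using hc t
  have hg_anti : AntitoneOn g (Set.Ici 0) := by
    refine antitoneOn_of_hasDerivWithinAt_nonpos (convex_Ici 0)
      (fun t _ => (hg t).continuousAt.continuousWithinAt)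
      (fun t _ => (hg t).hasDerivWithinAt) fun t ht => ?_
    rw [interior_Ici] at ht
    simpa [g'] using hg'_anti (le_of_lt ht)
  have h10 : g 1 ≤ g 0 := hg_anti Set.self_mem_Ici (zero_le_one' ℝ) zero_le_one
  simp only [g] at h10
  linarith

theorem le_add_inner_gradient_add_of_hasFDerivAt_gradient [CompleteSpace F] {E : F → ℝ}
    {K : F → F →L[ℝ] F} {ρ : ℝ} (hE : Differentiable ℝ E)
    (hK : ∀ w, HasFDerivAt (gradient E) (K w) w) (hρ : ∀ w v, ⟪K w v, v⟫ ≤ ρ * ‖v‖ ^ 2)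
    (x v : F) : E (x + v) ≤ E x + ⟪gradient E x, v⟫ + ρ / 2 * ‖v‖ ^ 2 := by
  have hline : ∀ t : ℝ, HasDerivAt (fun t : ℝ => x + t • v) v t := fun t => by
    simpa using ((hasDerivAt_id t).smul_const v).const_add x
  have htaylor := le_add_deriv_add_of_hasDerivAt_of_le (f := fun t : ℝ => E (x + t • v))
    (f' := fun t => ⟪gradient E (x + t • v), v⟫) (f'' := fun t => ⟪K (x + t • v) v, v⟫)
    (fun t => by
      simpa [Function.comp_def] using
        (hE _).hasGradientAt.hasFDerivAt.comp_hasDerivAt t (hline t))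
    (fun t => by
      simpa using ((hK _).comp_hasDerivAt t (hline t)).inner ℝ (hasDerivAt_const t v))
    (fun t => hρ _ v)
  simp only [one_smul, zero_smul, add_zero] at htaylor
  linarith

theorem newton_step_le_sub_mul_norm_gradient_sq [CompleteSpace F] {E : F → ℝ}
    {K : F → F →L[ℝ] F} {ρL ρU : ℝ}
    (hρL : 0 < ρL) (hρU : 0 < ρU) (hE : Differentiable ℝ E)
    (hK : ∀ w, HasFDerivAt (gradient E) (K w) w) (hup : ∀ w v, ⟪K w v, v⟫ ≤ ρU * ‖v‖ ^ 2)
    {x d : F} (hsymm : (K x : F →ₗ[ℝ] F).IsSymmetric) (hlow : ∀ v, ρL * ‖v‖ ^ 2 ≤ ⟪K x v, v⟫)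
    (hd : K x d = -gradient E x) :
    E (x + (ρL / ρU) • d) ≤ E x - ρL / (2 * ρU ^ 2) * ‖gradient E x‖ ^ 2 := by
  set q := ⟪K x d, d⟫
  have hgrad : ‖gradient E x‖ ^ 2 ≤ ρU * q := by
    rw [← norm_neg, ← hd]
    exact hsymm.norm_apply_sq_le_mul_inner (fun v => (mul_nonneg hρL.le (sq_nonneg _)).trans
      (hlow v)) hρU (hup x) d
  have hinner : ⟪gradient E x, d⟫ = -q := by
    rw [← neg_neg (gradient E x), ← hd, inner_neg_left]
  have hd_sq : ‖d‖ ^ 2 ≤ q / ρL := (le_div_iff₀' hρL).mpr (hlow d)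
  calc E (x + (ρL / ρU) • d)
      ≤ E x + ⟪gradient E x, (ρL / ρU) • d⟫ + ρU / 2 * ‖(ρL / ρU) • d‖ ^ 2 :=
        le_add_inner_gradient_add_of_hasFDerivAt_gradient hE hK hup x _
    _ = E x - ρL / ρU * q + ρL ^ 2 / (2 * ρU) * ‖d‖ ^ 2 := by
        rw [real_inner_smul_right, hinner, norm_smul, mul_pow, Real.norm_eq_abs, sq_abs]
        field_simp
        ring
    _ ≤ E x - ρL / ρU * q + ρL ^ 2 / (2 * ρU) * (q / ρL) := by gcongr
    _ = E x - ρL / (2 * ρU ^ 2) * (ρU * q) := by field_simp; ring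
    _ ≤ E x - ρL / (2 * ρU ^ 2) * ‖gradient E x‖ ^ 2 := by gcongr

theorem summable_of_succ_le_sub_mul {u a : ℕ → ℝ} {c m : ℝ} (hc : 0 < c) (ha : ∀ k, 0 ≤ a k)
    (hm : ∀ k, m ≤ u k) (hdec : ∀ k, u (k + 1) ≤ u k - c * a k) : Summable a := by
  refine summable_of_sum_range_le (c := (u 0 - m) / c) ha fun n => ?_
  rw [← mul_le_mul_iff_of_pos_left hc, Finset.mul_sum]
  calc ∑ k ∈ Finset.range n, c * a k ≤ ∑ k ∈ Finset.range n, (u k - u (k + 1)) :=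
        Finset.sum_le_sum fun k _ => by linarith [hdec k]
    _ = u 0 - u n := Finset.sum_range_sub' u n
    _ ≤ c * ((u 0 - m) / c) := by rw [mul_div_cancel₀ _ hc.ne']; linarith [hm n]

theorem newton_exact_linesearch_gradient_tendsto_zero_general {N : ℕ}
    (E : EuclideanSpace ℝ (Fin N) → ℝ)
    (K : EuclideanSpace ℝ (Fin N) → EuclideanSpace ℝ (Fin N) →L[ℝ] EuclideanSpace ℝ (Fin N))
    (ρL ρU : ℝ) (hρL : 0 < ρL) (hρ : ρL ≤ ρU)
    (hE : ContDiff ℝ 2 E)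
    (hcoer : Filter.Tendsto E (Filter.cocompact _) Filter.atTop)
    (hhess : ∀ w, HasFDerivAt (gradient E) (K w) w)
    (hsymm : ∀ w x y, ⟪K w x, y⟫ = ⟪x, K w y⟫)
    (heig : ∀ w v, ρL * ‖v‖ ^ 2 ≤ ⟪K w v, v⟫ ∧ ⟪K w v, v⟫ ≤ ρU * ‖v‖ ^ 2)
    (w Δw : ℕ → EuclideanSpace ℝ (Fin N)) (lam : ℕ → ℝ)
    (hnewton : ∀ k, K (w k) (Δw k) = -gradient E (w k))
    (hlam : ∀ k, lam k ∈ Set.Icc (0 : ℝ) 1 ∧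
      ∀ μ ∈ Set.Icc (0 : ℝ) 1, E (w k + lam k • Δw k) ≤ E (w k + μ • Δw k))
    (hupd : ∀ k, w (k + 1) = w k + lam k • Δw k) :
    Filter.Tendsto (fun k => ‖gradient E (w k)‖) Filter.atTop (nhds 0) := by
  have hρU : 0 < ρU := hρL.trans_le hρ
  have hdec : ∀ k, E (w (k + 1)) ≤ E (w k) - ρL / (2 * ρU ^ 2) * ‖gradient E (w k)‖ ^ 2 :=
    fun k => calc
      E (w (k + 1)) ≤ E (w k + (ρL / ρU) • Δw k) := by
        rw [hupd k]
        exact (hlam k).2 _ ⟨by positivity, div_le_one_of_le₀ hρ hρU.le⟩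
      _ ≤ _ := newton_step_le_sub_mul_norm_gradient_sq hρL hρU
          (hE.differentiable two_ne_zero) hhess (fun w v => (heig w v).2) (hsymm (w k))
          (fun v => (heig (w k) v).1) (hnewton k)
  obtain ⟨xmin, hxmin⟩ := hE.continuous.exists_forall_le hcoer
  have hsum := summable_of_succ_le_sub_mul (by positivity) (fun k => sq_nonneg _)
    (fun k => hxmin (w k)) hdec
  simpa using hsum.tendsto_atTop_zero.sqrt

/-- Per-step energy decrease of Newton's method with exact line search for a C²,
strictly convex, coercive energy with Hessian eigenvalues in `[ρL, ρU]`. -/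
theorem newton_exact_linesearch_gradient_tendsto_zero {N : ℕ}
    (E : EuclideanSpace ℝ (Fin N) → ℝ)
    (K : EuclideanSpace ℝ (Fin N) → EuclideanSpace ℝ (Fin N) →L[ℝ] EuclideanSpace ℝ (Fin N))
    (ρL ρU : ℝ) (hρL : 0 < ρL) (hρ : ρL ≤ ρU)
    (hE : ContDiff ℝ 2 E)
    (hconv : StrictConvexOn ℝ Set.univ E)
    (hcoer : Filter.Tendsto E (Filter.cocompact _) Filter.atTop)
    (hhess : ∀ w, HasFDerivAt (gradient E) (K w) w)
    (hsymm : ∀ w x y, ⟪K w x, y⟫ = ⟪x, K w y⟫)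
    (heig : ∀ w v, ρL * ‖v‖ ^ 2 ≤ ⟪K w v, v⟫ ∧ ⟪K w v, v⟫ ≤ ρU * ‖v‖ ^ 2)
    (w Δw : ℕ → EuclideanSpace ℝ (Fin N)) (lam : ℕ → ℝ)
    (hnewton : ∀ k, K (w k) (Δw k) = -gradient E (w k))
    (hlam : ∀ k, lam k ∈ Set.Icc (0 : ℝ) 1 ∧
      ∀ μ ∈ Set.Icc (0 : ℝ) 1, E (w k + lam k • Δw k) ≤ E (w k + μ • Δw k))
    (hupd : ∀ k, w (k + 1) = w k + lam k • Δw k) :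
    Filter.Tendsto (fun k => ‖gradient E (w k)‖) Filter.atTop (nhds 0) :=
  newton_exact_linesearch_gradient_tendsto_zero_general E K ρL ρU hρL hρ hE hcoer hhess hsymm heig w
    Δw lam hnewton hlam hupd
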